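/- Let X₀ be an n×k matrix with entries in [−1,1], fix a row i₀ and column j₀, and for t ∈ [−1,1] let X₀(t) be X₀ with its (i₀,j₀) entry replaced by t; set M(t) = L(X₀(t))ᵀL(X₀(t)) + C. Let W be a diagonal (|𝒮|+b)×(|𝒮|+b) matrix with strictly positive diagonal entries. If the function t ↦ det(M(t)) is a nonzero constant on [−1,1], then the function t ↦ tr(W·M(t)⁻¹) attains its minimum over [−1,1] at a unique point t* ∈ [−1,1]. (This is the weighted part of Corollary 2: when the D-criterion coordinate-update formula is constant, the A_W-criterion — and its Bayesian version — has a unique optimal coordinate exchange.) -/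

import Mathlib

open Matrix

/-- The model matrix of an `m`-factor interaction model given by the family `𝒮` of
subsets of factor indices: entry `(i, S)` is `∏_{j ∈ S} X i j`. -/
noncomputable def modelMatrix {n k : ℕ} (𝒮 : Finset (Finset (Fin k)))
    (X : Matrix (Fin n) (Fin k) ℝ) : Matrix (Fin n) {S // S ∈ 𝒮} ℝ :=
  Matrix.of fun i S => ∏ j ∈ S.1, X i j

/-- The full matrix `L(X) = [F(X) | Z]`. -/
noncomputable def fullMatrix {n k b : ℕ} (𝒮 : Finset (Finset (Fin k)))
    (Z : Matrix (Fin n) (Fin b) ℝ) (X : Matrix (Fin n) (Fin k) ℝ) :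
    Matrix (Fin n) ({S // S ∈ 𝒮} ⊕ Fin b) ℝ :=
  Matrix.fromCols (modelMatrix 𝒮 X) Z

/-- The design `X` with its `(i₀, j₀)` entry replaced by `t`. -/
def updateEntry {n k : ℕ} (X : Matrix (Fin n) (Fin k) ℝ) (i₀ : Fin n) (j₀ : Fin k)
    (t : ℝ) : Matrix (Fin n) (Fin k) ℝ :=
  Matrix.of fun i j => if i = i₀ ∧ j = j₀ then t else X i j

/-- The matrix `M(t) = L(X₀(t))ᵀ L(X₀(t)) + C` of the (Bayesian) criteria, as a
function of the exchanged coordinate value `t`. -/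
noncomputable def critMat {n k b : ℕ} (𝒮 : Finset (Finset (Fin k)))
    (Z : Matrix (Fin n) (Fin b) ℝ)
    (C : Matrix ({S // S ∈ 𝒮} ⊕ Fin b) ({S // S ∈ 𝒮} ⊕ Fin b) ℝ)
    (X₀ : Matrix (Fin n) (Fin k) ℝ) (i₀ : Fin n) (j₀ : Fin k) (t : ℝ) :
    Matrix ({S // S ∈ 𝒮} ⊕ Fin b) ({S // S ∈ 𝒮} ⊕ Fin b) ℝ :=
  (fullMatrix 𝒮 Z (updateEntry X₀ i₀ j₀ t))ᵀ * fullMatrix 𝒮 Z (updateEntry X₀ i₀ j₀ t) + C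

/-!
Replacing the entry `X₀ i₀ j₀` by `t` changes only row `i₀` of `L`, and affinely: that row
becomes `a + t v`, where the entry of `v` at the singleton `{j₀}` is `1`. Hence
`M(t) = N + t (a vᵀ + v aᵀ) + t² v vᵀ` with `N = M(0)` positive definite. By
`det (1 + AB) = det (1 + BA)`, `det M(t) = det N · (1 + 2qt + (q² + s - sp) t²)` with
`q = vᵀN⁻¹a`, `p = aᵀN⁻¹a` and `s = vᵀN⁻¹v > 0`, so a constant determinant forces `q = 0` and
`p = 1`. Then `M(t)⁻¹ = N⁻¹ - t (a'v'ᵀ + v'a'ᵀ) + t² s a'a'ᵀ` with `a' = N⁻¹a`, `v' = N⁻¹v`, so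
`tr (W M(t)⁻¹)` is a quadratic in `t` with leading coefficient `s · a'ᵀWa' > 0`, and a strictly
convex function has exactly one minimiser on a compact interval.
-/

section QuadraticPencil

variable {ι K : Type*} [Fintype ι] [DecidableEq ι] [CommRing K]

def quadraticPencil (N : Matrix ι ι K) (a v : ι → K) (t : K) : Matrix ι ι K :=
  N + t • (vecMulVec a v + vecMulVec v a) + t ^ 2 • vecMulVec v v

theorem quadraticPencil_eq_mul (N : Matrix ι ι K) (a v : ι → K) (t : K) (hN : IsUnit N.det) :
    quadraticPencil N a v t =
      N * (1 + (N⁻¹ * (Matrix.of ![a, v])ᵀ) * Matrix.of ![t • v, t • a + t ^ 2 • v]) := by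
  have : (Matrix.of ![a, v])ᵀ * Matrix.of ![t • v, t • a + t ^ 2 • v] =
      t • (vecMulVec a v + vecMulVec v a) + t ^ 2 • vecMulVec v v := by
    ext i j
    simp only [Matrix.mul_apply, transpose_apply, of_apply, Fin.sum_univ_two, cons_val_zero,
      cons_val_one, Pi.add_apply, Pi.smul_apply, smul_eq_mul, Matrix.add_apply, Matrix.smul_apply,
      vecMulVec_apply]
    ring
  rw [Matrix.mul_add, Matrix.mul_one, ← Matrix.mul_assoc, ← Matrix.mul_assoc,
    Matrix.mul_nonsing_inv _ hN, Matrix.one_mul, this, quadraticPencil, add_assoc]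

theorem det_quadraticPencil (N : Matrix ι ι K) (a v : ι → K) (t : K) (hN : IsUnit N.det) :
    (quadraticPencil N a v t).det = N.det * (1 + t * (v ⬝ᵥ N⁻¹ *ᵥ a + a ⬝ᵥ N⁻¹ *ᵥ v) +
      t ^ 2 * ((v ⬝ᵥ N⁻¹ *ᵥ a) * (a ⬝ᵥ N⁻¹ *ᵥ v) + (v ⬝ᵥ N⁻¹ *ᵥ v) * (1 - a ⬝ᵥ N⁻¹ *ᵥ a))) := by
  have entry : ∀ (x y : ι → K) (i j : Fin 2),
      (Matrix.of ![x, y] * (N⁻¹ * (Matrix.of ![a, v])ᵀ)) i j = ![x, y] i ⬝ᵥ N⁻¹ *ᵥ ![a, v] j :=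
    fun x y i j => by
    simp only [Matrix.mul_apply, dotProduct, mulVec, transpose_apply, of_apply, Finset.mul_sum]
  rw [quadraticPencil_eq_mul N a v t hN, det_mul, det_one_add_mul_comm, det_fin_two]
  simp only [Matrix.add_apply, entry, one_apply_eq, one_apply_ne zero_ne_one,
    one_apply_ne one_ne_zero, cons_val_zero, cons_val_one, add_dotProduct, smul_dotProduct,
    smul_eq_mul, zero_add]
  ring

theorem inv_quadraticPencil {N : Matrix ι ι K} {a v : ι → K} (hN : IsUnit N.det) (hNs : N.IsSymm)
    (hq : v ⬝ᵥ N⁻¹ *ᵥ a = 0) (hp : a ⬝ᵥ N⁻¹ *ᵥ a = 1) (t : K) :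
    (quadraticPencil N a v t)⁻¹ =
      N⁻¹ - t • (vecMulVec (N⁻¹ *ᵥ a) (N⁻¹ *ᵥ v) + vecMulVec (N⁻¹ *ᵥ v) (N⁻¹ *ᵥ a)) +
        (t ^ 2 * (v ⬝ᵥ N⁻¹ *ᵥ v)) • vecMulVec (N⁻¹ *ᵥ a) (N⁻¹ *ᵥ a) := by
  have hNN : N * N⁻¹ = 1 := mul_nonsing_inv N hN
  have vecMul_inv : ∀ x, x ᵥ* N⁻¹ = N⁻¹ *ᵥ x := fun x => by
    rw [← mulVec_transpose, hNs.inv.eq]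
  have mulVec_inv : ∀ x, N *ᵥ (N⁻¹ *ᵥ x) = x := fun x => by
    rw [mulVec_mulVec, hNN, one_mulVec]
  have hq' : a ⬝ᵥ N⁻¹ *ᵥ v = 0 := by
    rw [dotProduct_mulVec, vecMul_inv, dotProduct_comm, hq]
  refine inv_eq_right_inv ?_
  rw [quadraticPencil]
  simp only [Matrix.mul_add, Matrix.add_mul, Matrix.mul_sub, Matrix.smul_mul, Matrix.mul_smul]
  simp only [mul_vecMulVec, vecMulVec_mul, vecMulVec_mulVec, op_smul_eq_smul, hNN, mulVec_inv,
    vecMul_inv, hq, hq', hp, smul_vecMulVec, one_smul]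
  module

end QuadraticPencil

theorem StrictConvexOn.existsUnique_isMinOn {E : Type*} [TopologicalSpace E] [AddCommMonoid E]
    [Module ℝ E] {f : E → ℝ} {s : Set E} (hf : StrictConvexOn ℝ s f) (hs : IsCompact s)
    (hne : s.Nonempty) (hc : ContinuousOn f s) : ∃! x, x ∈ s ∧ IsMinOn f s x :=
  let ⟨x, hx, hmin⟩ := hs.exists_isMinOn hne hc
  ⟨x, ⟨hx, hmin⟩, fun _ ⟨hy, hminy⟩ => hf.eq_of_isMinOn hminy hmin hy hx⟩

theorem strictConvexOn_quadratic {ε : ℝ} (hε : 0 < ε) (β γ : ℝ) :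
    StrictConvexOn ℝ Set.univ fun x : ℝ => ε * x ^ 2 + β * x + γ := by
  refine ⟨convex_univ, fun x _ y _ hxy a b ha hb hab => ?_⟩
  have hgap : 0 < ε * a * b * (x - y) ^ 2 := by
    have := sub_ne_zero.2 hxy
    positivity
  obtain rfl : b = 1 - a := by linarith
  simp only [smul_eq_mul]
  nlinarith [hgap]

theorem Matrix.PosDef.dotProduct_mulVec_self_pos {ι : Type*} [Fintype ι] {M : Matrix ι ι ℝ}
    (hM : M.PosDef) {v : ι → ℝ} (hv : v ≠ 0) : 0 < v ⬝ᵥ M *ᵥ v := by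
  simpa using hM.dotProduct_mulVec_pos hv

section Real

variable {ι : Type*} [Fintype ι] [DecidableEq ι] {N : Matrix ι ι ℝ} {a v : ι → ℝ}

theorem Matrix.PosDef.dotProduct_inv_mulVec_eq_of_det_quadraticPencil (hN : N.PosDef)
    (hv : v ≠ 0) (h₁ : (quadraticPencil N a v 1).det = N.det)
    (h₂ : (quadraticPencil N a v (-1)).det = N.det) :
    v ⬝ᵥ N⁻¹ *ᵥ a = 0 ∧ a ⬝ᵥ N⁻¹ *ᵥ a = 1 := by
  have hdet : N.det ≠ 0 := hN.det_pos.ne'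
  have hs : v ⬝ᵥ N⁻¹ *ᵥ v ≠ 0 := (hN.inv.dotProduct_mulVec_self_pos hv).ne'
  have hsymm : a ⬝ᵥ N⁻¹ *ᵥ v = v ⬝ᵥ N⁻¹ *ᵥ a := by
    rw [dotProduct_mulVec, ← mulVec_transpose,
      (isHermitian_iff_isSymm.1 hN.isHermitian).inv.eq, dotProduct_comm]
  rw [det_quadraticPencil _ _ _ _ hdet.isUnit, hsymm] at h₁ h₂
  have hq : v ⬝ᵥ N⁻¹ *ᵥ a = 0 :=
    mul_left_cancel₀ hdet (by linear_combination (h₁ - h₂) / 4)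
  have hp : (v ⬝ᵥ N⁻¹ *ᵥ v) * (1 - a ⬝ᵥ N⁻¹ *ᵥ a) = 0 :=
    mul_left_cancel₀ hdet (by linear_combination (h₁ + h₂) / 2 - N.det * (v ⬝ᵥ N⁻¹ *ᵥ a) * hq)
  exact ⟨hq, by linarith [(mul_eq_zero.1 hp).resolve_left hs]⟩

theorem existsUnique_isMinOn_trace_mul_inv_quadraticPencil {W : Matrix ι ι ℝ} (hN : N.PosDef)
    (hW : W.PosDef) (hv : v ≠ 0) (h₁ : (quadraticPencil N a v 1).det = N.det)
    (h₂ : (quadraticPencil N a v (-1)).det = N.det) {s : Set ℝ} (hs : IsCompact s)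
    (hsc : Convex ℝ s) (hne : s.Nonempty) :
    ∃! t, t ∈ s ∧ IsMinOn (fun t => (W * (quadraticPencil N a v t)⁻¹).trace) s t := by
  obtain ⟨hq, hp⟩ := hN.dotProduct_inv_mulVec_eq_of_det_quadraticPencil hv h₁ h₂
  have ha : N⁻¹ *ᵥ a ≠ 0 := fun h => by simp [h] at hp
  have hlead : 0 < (v ⬝ᵥ N⁻¹ *ᵥ v) * ((N⁻¹ *ᵥ a) ⬝ᵥ W *ᵥ N⁻¹ *ᵥ a) :=
    mul_pos (hN.inv.dotProduct_mulVec_self_pos hv) (hW.dotProduct_mulVec_self_pos ha)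
  have htrace : (fun t => (W * (quadraticPencil N a v t)⁻¹).trace) = fun t =>
      (v ⬝ᵥ N⁻¹ *ᵥ v) * ((N⁻¹ *ᵥ a) ⬝ᵥ W *ᵥ N⁻¹ *ᵥ a) * t ^ 2 +
        -((W *ᵥ N⁻¹ *ᵥ a) ⬝ᵥ N⁻¹ *ᵥ v + (W *ᵥ N⁻¹ *ᵥ v) ⬝ᵥ N⁻¹ *ᵥ a) * t + (W * N⁻¹).trace := by
    funext t
    rw [inv_quadraticPencil hN.det_pos.ne'.isUnit (isHermitian_iff_isSymm.1 hN.isHermitian) hq hp]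
    simp only [Matrix.mul_add, Matrix.mul_sub, Matrix.mul_smul, trace_add, trace_sub, trace_smul,
      mul_vecMulVec, trace_vecMulVec, smul_eq_mul]
    rw [dotProduct_comm (W *ᵥ N⁻¹ *ᵥ a) (N⁻¹ *ᵥ a)]
    ring
  rw [htrace]
  exact ((strictConvexOn_quadratic hlead _ _).subset (Set.subset_univ s) hsc).existsUnique_isMinOn
    hs hne (by fun_prop)

end Real

theorem Matrix.transpose_mul_self_add_smul_vecMulVec_single {m ι K : Type*} [Fintype m]
    [DecidableEq m] [CommRing K] (L : Matrix m ι K) (i : m) (v : ι → K) (t : K) :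
    (L + t • vecMulVec (Pi.single i 1) v)ᵀ * (L + t • vecMulVec (Pi.single i 1) v) =
      Lᵀ * L + t • (vecMulVec (L i) v + vecMulVec v (L i)) + t ^ 2 • vecMulVec v v := by
  simp only [transpose_add, transpose_smul, transpose_vecMulVec, Matrix.add_mul, Matrix.mul_add,
    Matrix.smul_mul, Matrix.mul_smul]
  simp only [mul_vecMulVec, vecMulVec_mul, vecMulVec_mulVec, op_smul_eq_smul, single_one_vecMul,
    mulVec_transpose, single_dotProduct, Pi.single_eq_same, one_mul, one_smul, row]
  module

section ExchangeDirection

variable {n k b : ℕ} (𝒮 : Finset (Finset (Fin k))) (Z : Matrix (Fin n) (Fin b) ℝ)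
  (X : Matrix (Fin n) (Fin k) ℝ) (i₀ : Fin n) (j₀ : Fin k)

/-- The partial derivative of row `i₀` of `fullMatrix 𝒮 Z X` in the entry `X i₀ j₀`. -/
noncomputable def exchangeDirection : {S // S ∈ 𝒮} ⊕ Fin b → ℝ :=
  Sum.elim (fun S => if j₀ ∈ S.1 then ∏ j ∈ S.1 \ {j₀}, X i₀ j else 0) 0

theorem updateEntry_self (t : ℝ) : updateEntry X i₀ j₀ t i₀ = Function.update (X i₀) j₀ t := by
  ext j
  by_cases hj : j = j₀ <;> simp [updateEntry, hj]

theorem updateEntry_of_ne {i : Fin n} (hi : i ≠ i₀) (t : ℝ) : updateEntry X i₀ j₀ t i = X i := by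
  ext j
  simp [updateEntry, hi]

theorem fullMatrix_updateEntry (t : ℝ) :
    fullMatrix 𝒮 Z (updateEntry X i₀ j₀ t) = fullMatrix 𝒮 Z (updateEntry X i₀ j₀ 0) +
      t • vecMulVec (Pi.single i₀ 1) (exchangeDirection (b := b) 𝒮 X i₀ j₀) := by
  ext i (S | r)
  · by_cases hi : i = i₀
    · subst hi
      by_cases hj : j₀ ∈ S.1 <;>
        simp [fullMatrix, modelMatrix, exchangeDirection, updateEntry_self, hj, vecMulVec_apply,
          Finset.prod_update_of_mem, Finset.prod_update_of_notMem]
    · simp [fullMatrix, modelMatrix, exchangeDirection, updateEntry_of_ne, hi, vecMulVec_apply]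
  · simp [fullMatrix, exchangeDirection, vecMulVec_apply]

theorem exchangeDirection_ne_zero (h : {j₀} ∈ 𝒮) : exchangeDirection (b := b) 𝒮 X i₀ j₀ ≠ 0 :=
  fun h0 => by simpa [exchangeDirection] using congr_fun h0 (.inl ⟨{j₀}, h⟩)

variable {𝒮} (C : Matrix ({S // S ∈ 𝒮} ⊕ Fin b) ({S // S ∈ 𝒮} ⊕ Fin b) ℝ)

theorem critMat_eq_quadraticPencil (t : ℝ) :
    critMat 𝒮 Z C X i₀ j₀ t = quadraticPencil (critMat 𝒮 Z C X i₀ j₀ 0)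
      (fullMatrix 𝒮 Z (updateEntry X i₀ j₀ 0) i₀) (exchangeDirection 𝒮 X i₀ j₀) t := by
  rw [critMat, fullMatrix_updateEntry 𝒮 Z X i₀ j₀ t,
    transpose_mul_self_add_smul_vecMulVec_single, quadraticPencil, critMat]
  abel

theorem critMat_posSemidef (hC : C.PosSemidef) (t : ℝ) :
    (critMat 𝒮 Z C X i₀ j₀ t).PosSemidef := by
  simpa [critMat] using
    (posSemidef_conjTranspose_mul_self (fullMatrix 𝒮 Z (updateEntry X i₀ j₀ t))).add hC

end ExchangeDirection

theorem stmt3_general (n k b : ℕ)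
    (𝒮 : Finset (Finset (Fin k)))
    (hsingle : ∀ j : Fin k, {j} ∈ 𝒮)
    (Z : Matrix (Fin n) (Fin b) ℝ)
    (C : Matrix ({S // S ∈ 𝒮} ⊕ Fin b) ({S // S ∈ 𝒮} ⊕ Fin b) ℝ)
    (hC : C.PosSemidef)
    (X₀ : Matrix (Fin n) (Fin k) ℝ)
    (i₀ : Fin n) (j₀ : Fin k)
    (w : ({S // S ∈ 𝒮} ⊕ Fin b) → ℝ) (hw : ∀ a, 0 < w a)
    (hdet : ∃ c : ℝ, c ≠ 0 ∧ ∀ t ∈ Set.Icc (-1 : ℝ) 1,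
      (critMat 𝒮 Z C X₀ i₀ j₀ t).det = c) :
    ∃! tstar : ℝ, tstar ∈ Set.Icc (-1 : ℝ) 1 ∧
      ∀ t ∈ Set.Icc (-1 : ℝ) 1,
        (Matrix.diagonal w * (critMat 𝒮 Z C X₀ i₀ j₀ tstar)⁻¹).trace ≤
          (Matrix.diagonal w * (critMat 𝒮 Z C X₀ i₀ j₀ t)⁻¹).trace := by
  obtain ⟨c, hc, hconst⟩ := hdet
  have hdet : ∀ t ∈ Set.Icc (-1 : ℝ) 1,
      (critMat 𝒮 Z C X₀ i₀ j₀ t).det = (critMat 𝒮 Z C X₀ i₀ j₀ 0).det := fun t ht =>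
    (hconst t ht).trans (hconst 0 ⟨by norm_num, by norm_num⟩).symm
  have hN : (critMat 𝒮 Z C X₀ i₀ j₀ 0).PosDef :=
    (critMat_posSemidef Z X₀ i₀ j₀ C hC 0).posDef_iff_det_ne_zero.2
      (hconst 0 ⟨by norm_num, by norm_num⟩ ▸ hc)
  have key := existsUnique_isMinOn_trace_mul_inv_quadraticPencil hN (PosDef.diagonal hw)
    (exchangeDirection_ne_zero 𝒮 X₀ i₀ j₀ (hsingle j₀))
    (critMat_eq_quadraticPencil Z X₀ i₀ j₀ C 1 ▸ hdet 1 ⟨by norm_num, by norm_num⟩)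
    (critMat_eq_quadraticPencil Z X₀ i₀ j₀ C (-1) ▸ hdet (-1) ⟨by norm_num, by norm_num⟩)
    isCompact_Icc (convex_Icc (-1) 1) (Set.nonempty_Icc.2 (by norm_num))
  simpa only [← critMat_eq_quadraticPencil, isMinOn_iff] using key

/-- The weighted part of Corollary 2: when the `D`-criterion coordinate-update formula
is constant, the `A_W`-criterion (and its Bayesian version) has a unique optimal
coordinate exchange. -/
theorem stmt3 (n k m b : ℕ) (hn : 0 < n) (hk : 0 < k) (hm : 0 < m) (hmk : m ≤ k)
    (hb : 0 < b)
    (𝒮 : Finset (Finset (Fin k)))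
    (hsingle : ∀ j : Fin k, {j} ∈ 𝒮)
    (hS : ∀ S ∈ 𝒮, S.Nonempty ∧ S.card ≤ m)
    (hmax : ∃ S ∈ 𝒮, S.card = m)
    (Z : Matrix (Fin n) (Fin b) ℝ)
    (C : Matrix ({S // S ∈ 𝒮} ⊕ Fin b) ({S // S ∈ 𝒮} ⊕ Fin b) ℝ)
    (hC : C.PosSemidef)
    (X₀ : Matrix (Fin n) (Fin k) ℝ)
    (hX₀ : ∀ i j, X₀ i j ∈ Set.Icc (-1 : ℝ) 1)
    (i₀ : Fin n) (j₀ : Fin k)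
    (w : ({S // S ∈ 𝒮} ⊕ Fin b) → ℝ) (hw : ∀ a, 0 < w a)
    (hdet : ∃ c : ℝ, c ≠ 0 ∧ ∀ t ∈ Set.Icc (-1 : ℝ) 1,
      (critMat 𝒮 Z C X₀ i₀ j₀ t).det = c) :
    ∃! tstar : ℝ, tstar ∈ Set.Icc (-1 : ℝ) 1 ∧
      ∀ t ∈ Set.Icc (-1 : ℝ) 1,
        (Matrix.diagonal w * (critMat 𝒮 Z C X₀ i₀ j₀ tstar)⁻¹).trace ≤
          (Matrix.diagonal w * (critMat 𝒮 Z C X₀ i₀ j₀ t)⁻¹).trace :=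
  stmt3_general n k b 𝒮 hsingle Z C hC X₀ i₀ j₀ w hw hdet
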